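/- arXiv:1705.10958 — 8 statements merged into one kernel-verified Lean document; each statement's English description precedes it below -/
import Mathlib

section
/- Let G and Ĉ be positive self-adjoint bounded operators on a Hilbert space, λ > 0, and set t = ‖(Ĉ + λI)^{-1/2} (Ĉ - G) (Ĉ + λI)^{-1/2}‖. If t < 1, then ‖(G + λI)^{-1/2} (Ĉ - G) (G + λI)^{-1/2}‖ ≤ t/(1 - t). -/
open ContinuousLinearMap

/-- For positive self-adjoint `G`, `Ĉ` and `λ > 0`, setting
`t = ‖(Ĉ+λI)^{-1/2} (Ĉ - G) (Ĉ+λI)^{-1/2}‖`, if `t < 1` then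
`‖(G+λI)^{-1/2} (Ĉ - G) (G+λI)^{-1/2}‖ ≤ t/(1 - t)`.  Here `JC`, `JG` are the
positive square roots of the inverses of `Ĉ + λI` and `G + λI` respectively,
commuting with `Ĉ` and `G` as functions thereof. -/
theorem stmt7 {H : Type*} [NormedAddCommGroup H] [InnerProductSpace ℝ H]
    [CompleteSpace H] [TopologicalSpace.SeparableSpace H]
    (G Chat JC JG : H →L[ℝ] H) (lam : ℝ) (hlam : 0 < lam)
    (hG : G.IsPositive) (hChat : Chat.IsPositive)
    (hJCpos : JC.IsPositive)
    (hJC1 : (JC ∘L JC) ∘L (Chat + lam • 1) = 1)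
    (hJC2 : (Chat + lam • 1) ∘L (JC ∘L JC) = 1)
    (hcommC : Commute JC Chat)
    (hJGpos : JG.IsPositive)
    (hJG1 : (JG ∘L JG) ∘L (G + lam • 1) = 1)
    (hJG2 : (G + lam • 1) ∘L (JG ∘L JG) = 1)
    (hcommG : Commute JG G)
    (ht : ‖JC ∘L (Chat - G) ∘L JC‖ < 1) :
    ‖JG ∘L (Chat - G) ∘L JG‖ ≤
      ‖JC ∘L (Chat - G) ∘L JC‖ / (1 - ‖JC ∘L (Chat - G) ∘L JC‖) := by
  -- notation: work multiplicatively
  set D := Chat - G with hD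
  set B := Chat + lam • 1 with hBdef
  set A := G + lam • 1 with hAdef
  set K := JC * B with hKdef
  have hassoc : ∀ X Y Z : H →L[ℝ] H, X ∘L Y ∘L Z = X * Y * Z :=
    fun X Y Z => (mul_assoc X Y Z).symm
  simp only [hassoc] at ht ⊢
  -- basic commutation facts
  have hsm : ∀ X : H →L[ℝ] H, Commute X (lam • 1) := fun X => by
    unfold Commute SemiconjBy
    ext x
    simp [ContinuousLinearMap.mul_apply]
  have hcomB : Commute JC B := hcommC.add_right (hsm JC)
  have hcomA : Commute JG A := hcommG.add_right (hsm JG)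
  have hJC1' : JC * JC * B = 1 := hJC1
  have hJG1' : JG * JG * A = 1 := hJG1
  -- K is the square root of B, inverse of JC
  have hKJC : K * JC = 1 := by
    calc K * JC = JC * (B * JC) := by rw [hKdef, mul_assoc]
    _ = JC * (JC * B) := by rw [← hcomB.eq]
    _ = JC * JC * B := (mul_assoc _ _ _).symm
    _ = 1 := hJC1'
  have hJCK : JC * K = 1 := by
    calc JC * K = JC * JC * B := by rw [hKdef, mul_assoc]
    _ = 1 := hJC1'
  have hKK : K * K = B := by
    calc K * K = JC * (B * JC) * B := by rw [hKdef]; simp only [mul_assoc]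
    _ = JC * (JC * B) * B := by rw [← hcomB.eq]
    _ = (JC * JC * B) * B := by simp only [mul_assoc]
    _ = B := by rw [hJC1', one_mul]
  have hJAJ : JG * A * JG = 1 := by
    calc JG * A * JG = JG * (A * JG) := mul_assoc _ _ _
    _ = JG * (JG * A) := by rw [← hcomA.eq]
    _ = JG * JG * A := (mul_assoc _ _ _).symm
    _ = 1 := hJG1'
  -- self-adjointness
  have hJGsa : star JG = JG := hJGpos.isSelfAdjoint
  have hJCsa : star JC = JC := hJCpos.isSelfAdjoint
  have hBsa : star B = B := by
    rw [hBdef, star_add, hChat.isSelfAdjoint, star_smul, star_one, star_trivial]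
  have hKsa : star K = K := by
    rw [hKdef, star_mul, hBsa, hJCsa, ← hcomB.eq]
  -- key factorization
  have key : (JG * K) * ((JC * D * JC) * (K * JG)) = JG * D * JG := by
    calc (JG * K) * ((JC * D * JC) * (K * JG))
        = JG * ((K * JC) * (D * ((JC * K) * JG))) := by simp only [mul_assoc]
      _ = JG * (D * JG) := by rw [hKJC, hJCK, one_mul, one_mul]
      _ = JG * D * JG := (mul_assoc _ _ _).symm
  set t := ‖JC * D * JC‖ with htdef
  set s := ‖JG * D * JG‖ with hsdef
  have ht0 : 0 ≤ t := norm_nonneg _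
  have hs0 : 0 ≤ s := norm_nonneg _
  have hnormKJ : ‖JG * K‖ = ‖K * JG‖ := by
    have h : star (K * JG) = JG * K := by rw [star_mul, hKsa, hJGsa]
    rw [← h, ContinuousLinearMap.star_eq_adjoint]
    exact ContinuousLinearMap.adjoint.norm_map _
  have hs1 : s ≤ ‖K * JG‖ * t * ‖K * JG‖ := by
    calc s = ‖(JG * K) * ((JC * D * JC) * (K * JG))‖ := by rw [key]
      _ ≤ ‖JG * K‖ * ‖(JC * D * JC) * (K * JG)‖ := norm_mul_le _ _
      _ ≤ ‖JG * K‖ * (t * ‖K * JG‖) := by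
          gcongr; exact norm_mul_le _ _
      _ = ‖K * JG‖ * t * ‖K * JG‖ := by rw [hnormKJ]; ring
  have hBJ : JG * B * JG = 1 + JG * D * JG := by
    have hAB : A + D = B := by rw [hAdef, hD, hBdef]; abel
    calc JG * B * JG = JG * (A + D) * JG := by rw [hAB]
      _ = JG * A * JG + JG * D * JG := by rw [mul_add, add_mul]
      _ = 1 + JG * D * JG := by rw [hJAJ]
  have hsq : ‖K * JG‖ * ‖K * JG‖ ≤ 1 + s := by
    have h1 : star (K * JG) * (K * JG) = JG * B * JG := by
      rw [star_mul, hKsa, hJGsa]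
      calc JG * K * (K * JG) = JG * (K * K) * JG := by simp only [mul_assoc]
        _ = JG * B * JG := by rw [hKK]
    have hone : ‖(1 : H →L[ℝ] H)‖ ≤ 1 := by
      rw [ContinuousLinearMap.one_def]; exact ContinuousLinearMap.norm_id_le
    calc ‖K * JG‖ * ‖K * JG‖ = ‖star (K * JG) * (K * JG)‖ :=
          (CStarRing.norm_star_mul_self).symm
      _ = ‖1 + JG * D * JG‖ := by rw [h1, hBJ]
      _ ≤ ‖(1 : H →L[ℝ] H)‖ + s := norm_add_le _ _
      _ ≤ 1 + s := by linarith
  rw [le_div_iff₀ (by linarith)]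
  nlinarith [norm_nonneg (K * JG)]
end

section
/- Let C and Ĉ_M be positive self-adjoint bounded operators on a Hilbert space, λ > 0, and suppose η := ‖(C+λI)^{-1/2}(C - Ĉ_M)(C+λI)^{-1/2}‖ < 1. Then ‖(Ĉ_M + λI)^{-1/2} (C + λI)^{1/2}‖² ≤ (1 - η)^{-1}. -/
/-!
Write `S = C + λI`, `S_M = Ĉ_M + λI`, `J = S^{-1/2}`. Since `J` is onto, every `w` is `J z`, and
then `⟪(C - Ĉ_M) w, w⟫ = ⟪J (C - Ĉ_M) J z, z⟫ ≤ η ‖z‖² = η ⟪S w, w⟫`. As `S - S_M = C - Ĉ_M`,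
this gives `(1 - η) S ≤ S_M` in the sense of quadratic forms. Evaluating at `w = S_M^{-1/2} y`
yields `‖S^{1/2} S_M^{-1/2} y‖² ≤ (1 - η)⁻¹ ‖y‖²`, and taking adjoints swaps the two factors.
-/

open ContinuousLinearMap
open scoped RealInnerProductSpace

theorem Commute.mul_mul_eq_one_of_mul_self_mul {M : Type*} [Monoid M] {a b : M}
    (h : Commute a b) (hab : a * a * b = 1) : a * (b * a) = 1 := by
  rw [← h.eq, ← mul_assoc, hab]

namespace ContinuousLinearMap

theorem opNorm_sq_le_of_norm_apply_sq_le {𝕜 E F : Type*} [NontriviallyNormedField 𝕜]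
    [SeminormedAddCommGroup E] [SeminormedAddCommGroup F] [NormedSpace 𝕜 E] [NormedSpace 𝕜 F]
    (T : E →L[𝕜] F) {c : ℝ} (hc : 0 ≤ c)
    (h : ∀ x, ‖T x‖ ^ 2 ≤ c * ‖x‖ ^ 2) : ‖T‖ ^ 2 ≤ c := by
  have hT : ‖T‖ ≤ √c := T.opNorm_le_bound (Real.sqrt_nonneg c) fun x => by
    rw [← Real.sqrt_sq (norm_nonneg (T x)), ← Real.sqrt_sq (norm_nonneg x), ← Real.sqrt_mul hc]
    exact Real.sqrt_le_sqrt (h x)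
  calc ‖T‖ ^ 2 ≤ √c ^ 2 := pow_le_pow_left₀ (norm_nonneg T) hT 2
    _ = c := Real.sq_sqrt hc

variable {H : Type*} [NormedAddCommGroup H] [InnerProductSpace ℝ H] {J R S S' : H →L[ℝ] H}

theorem inner_map_self_eq_norm_sq_of_comp_self (hR : R.IsSymmetric) (hRS : R ∘L R = S) (w : H) :
    ⟪S w, w⟫ = ‖R w‖ ^ 2 := by
  rw [← hRS, comp_apply, ← real_inner_self_eq_norm_sq]
  exact hR (R w) w

theorem inner_map_map_self_of_comp_comp_eq_one (hJ : J.IsSymmetric) (hJSJ : J ∘L S ∘L J = 1)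
    (z : H) : ⟪S (J z), J z⟫ = ‖z‖ ^ 2 := by
  calc ⟪S (J z), J z⟫ = ⟪(J ∘L S ∘L J) z, z⟫ := (hJ (S (J z)) z).symm
    _ = ‖z‖ ^ 2 := by rw [hJSJ, one_apply_eq_self, real_inner_self_eq_norm_sq]

theorem inner_map_self_le_norm_comp_comp_mul (hJ : J.IsSymmetric) (hJSJ : J ∘L S ∘L J = 1)
    (D : H →L[ℝ] H) (w : H) : ⟪D w, w⟫ ≤ ‖J ∘L D ∘L J‖ * ⟪S w, w⟫ := by
  obtain ⟨z, rfl⟩ : ∃ z, J z = w := ⟨S (J w), by simpa using congr($hJSJ w)⟩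
  calc ⟪D (J z), J z⟫ = ⟪(J ∘L D ∘L J) z, z⟫ := (hJ (D (J z)) z).symm
    _ ≤ ‖(J ∘L D ∘L J) z‖ * ‖z‖ := real_inner_le_norm _ z
    _ ≤ ‖J ∘L D ∘L J‖ * ‖z‖ * ‖z‖ := by gcongr; exact le_opNorm _ z
    _ = ‖J ∘L D ∘L J‖ * ‖z‖ ^ 2 := by ring
    _ = ‖J ∘L D ∘L J‖ * ⟪S (J z), J z⟫ := by rw [inner_map_map_self_of_comp_comp_eq_one hJ hJSJ]

theorem one_sub_norm_mul_inner_le (hJ : J.IsSymmetric) (hJSJ : J ∘L S ∘L J = 1) (w : H) :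
    (1 - ‖J ∘L (S - S') ∘L J‖) * ⟪S w, w⟫ ≤ ⟪S' w, w⟫ := by
  have h := inner_map_self_le_norm_comp_comp_mul hJ hJSJ (S - S') w
  rw [sub_apply, inner_sub_left] at h
  linarith

theorem norm_comp_sq_le_of_relative_bound {K : H →L[ℝ] H} (hJ : J.IsSymmetric)
    (hJSJ : J ∘L S ∘L J = 1) (hR : R.IsSymmetric) (hRS : R ∘L R = S) (hK : K.IsSymmetric)
    (hKSK : K ∘L S' ∘L K = 1) (hη : ‖J ∘L (S - S') ∘L J‖ < 1) :
    ‖R ∘L K‖ ^ 2 ≤ (1 - ‖J ∘L (S - S') ∘L J‖)⁻¹ := by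
  have hpos : 0 < 1 - ‖J ∘L (S - S') ∘L J‖ := sub_pos.mpr hη
  refine (R ∘L K).opNorm_sq_le_of_norm_apply_sq_le (inv_nonneg.mpr hpos.le) fun y => ?_
  have h := one_sub_norm_mul_inner_le (S' := S') hJ hJSJ (K y)
  rw [inner_map_self_eq_norm_sq_of_comp_self hR hRS,
    inner_map_map_self_of_comp_comp_eq_one hK hKSK] at h
  rw [comp_apply, inv_mul_eq_div, le_div_iff₀ hpos, mul_comm]
  exact h

end ContinuousLinearMap

/-- `JC = (C + λI)^{-1/2}`, `RC = (C + λI)^{1/2}` and `JM = (Ĉ_M + λI)^{-1/2}`, each given through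
its defining identities. -/
theorem stmt8_general {H : Type*} [NormedAddCommGroup H] [InnerProductSpace ℝ H]
    [CompleteSpace H]
    (C CM JC RC JM : H →L[ℝ] H) (lam : ℝ)
    (hJCpos : JC.IsPositive)
    (hJC1 : (JC ∘L JC) ∘L (C + lam • 1) = 1)
    (hcommJC : Commute JC C)
    (hRCpos : RC.IsPositive) (hRC : RC ∘L RC = C + lam • 1)
    (hJMpos : JM.IsPositive)
    (hJM1 : (JM ∘L JM) ∘L (CM + lam • 1) = 1)
    (hcommJM : Commute JM CM)
    (heta : ‖JC ∘L (C - CM) ∘L JC‖ < 1) :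
    ‖JM ∘L RC‖ ^ 2 ≤ (1 - ‖JC ∘L (C - CM) ∘L JC‖)⁻¹ := by
  have hcomm {T A : H →L[ℝ] H} (h : Commute T A) : Commute T (A + lam • 1) :=
    h.add_right ((Commute.one_right T).smul_right lam)
  have hJC := (hcomm hcommJC).mul_mul_eq_one_of_mul_self_mul hJC1
  have hJM := (hcomm hcommJM).mul_mul_eq_one_of_mul_self_mul hJM1
  rw [← add_sub_add_right_eq_sub C CM (lam • 1)] at heta ⊢
  have hswap : ‖JM ∘L RC‖ = ‖RC ∘L JM‖ := by
    rw [← LinearIsometryEquiv.norm_map adjoint (RC ∘L JM), adjoint_comp,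
      hRCpos.isSelfAdjoint.adjoint_eq, hJMpos.isSelfAdjoint.adjoint_eq]
  rw [hswap]
  exact norm_comp_sq_le_of_relative_bound hJCpos.isSymmetric hJC hRCpos.isSymmetric hRC
    hJMpos.isSymmetric hJM heta

/-- For positive self-adjoint `C`, `Ĉ_M` and `λ > 0`, if
`η = ‖(C+λI)^{-1/2}(C - Ĉ_M)(C+λI)^{-1/2}‖ < 1`, then
`‖(Ĉ_M + λI)^{-1/2} (C + λI)^{1/2}‖² ≤ (1 - η)⁻¹`.  Here `JC` is the positive
square root of the inverse of `C + λI`, `RC` the positive square root of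
`C + λI`, and `JM` the positive square root of the inverse of `Ĉ_M + λI`. -/
theorem stmt8 {H : Type*} [NormedAddCommGroup H] [InnerProductSpace ℝ H]
    [CompleteSpace H] [TopologicalSpace.SeparableSpace H]
    (C CM JC RC JM : H →L[ℝ] H) (lam : ℝ) (hlam : 0 < lam)
    (hC : C.IsPositive) (hCM : CM.IsPositive)
    (hJCpos : JC.IsPositive)
    (hJC1 : (JC ∘L JC) ∘L (C + lam • 1) = 1)
    (hJC2 : (C + lam • 1) ∘L (JC ∘L JC) = 1)
    (hcommJC : Commute JC C)
    (hRCpos : RC.IsPositive) (hRC : RC ∘L RC = C + lam • 1)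
    (hcommRC : Commute RC C)
    (hJMpos : JM.IsPositive)
    (hJM1 : (JM ∘L JM) ∘L (CM + lam • 1) = 1)
    (hJM2 : (CM + lam • 1) ∘L (JM ∘L JM) = 1)
    (hcommJM : Commute JM CM)
    (heta : ‖JC ∘L (C - CM) ∘L JC‖ < 1) :
    ‖JM ∘L RC‖ ^ 2 ≤ (1 - ‖JC ∘L (C - CM) ∘L JC‖)⁻¹ :=
  stmt8_general C CM JC RC JM lam hJCpos hJC1 hcommJC hRCpos hRC hJMpos hJM1 hcommJM heta
end

section
/- Let Ŝ_M : H → ℝ^M be a bounded operator, D an invertible diagonal M×M matrix, K_MM = M Ŝ_M Ŝ_M*, and Q, T, A as in the generalized preconditioner (D K_MM D = Q T^⊤ T Q^⊤, Q^⊤Q = I, A^⊤A = (1/M) T T^⊤ + λ I with λ > 0). Define B = (1/√n) D Q T^{-1} A^{-1} and V = √(nM) Ŝ_M* B A. Then V*V = I_q and V V* Ŝ_M* = Ŝ_M*, i.e., V is a partial isometry whose range projection fixes the range of Ŝ_M*. -/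
/-!
Put `Y = √M · D Ŝ_M`. Since `D` is self-adjoint, the factorization says `Y Y* = Q TᵀT Qᵀ`, and `A`
cancels from `V`, leaving `V = Y* Q T⁻¹`. Then `V*V = T⁻ᵀ (QᵀQ) TᵀT (QᵀQ) T⁻¹ = 1`. For the second
identity, `V V* Y* = Y* Q T⁻¹ T⁻ᵀ Qᵀ Q TᵀT Qᵀ = Y* Q Qᵀ`, and `Y* Q Qᵀ = Y*` because
`range Y ⊆ range (Y Y*) ⊆ range Q` (the first inclusion by finite dimensionality of `ℝ^M`) and
`Q Qᵀ` is the orthogonal projection onto `range Q`.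
-/

open ContinuousLinearMap

section

variable {𝕜 H E F : Type*} [RCLike 𝕜]
  [NormedAddCommGroup H] [InnerProductSpace 𝕜 H]
  [NormedAddCommGroup E] [InnerProductSpace 𝕜 E] [CompleteSpace E]
  [NormedAddCommGroup F] [InnerProductSpace 𝕜 F] [CompleteSpace F]

theorem comp_adjoint_comp_of_range_le {Q : F →L[𝕜] E} (hQ : adjoint Q ∘L Q = 1)
    {Y : H →L[𝕜] E} (hY : Y.range ≤ Q.range) :
    Q ∘L adjoint Q ∘L Y = Y := by
  ext x
  obtain ⟨z, hz⟩ := hY ⟨x, rfl⟩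
  change Q z = Y x at hz
  have hQz : adjoint Q (Q z) = z := congr($hQ z)
  rw [comp_apply, comp_apply, ← hz, hQz]

theorem adjoint_comp_adjoint_eq_one {T Tinv : F →L[𝕜] F} (hT : T ∘L Tinv = 1) :
    adjoint Tinv ∘L adjoint T = 1 := by
  rw [← adjoint_comp, hT, ← star_eq_adjoint, star_one]

variable [CompleteSpace H]

theorem range_le_range_comp_adjoint [FiniteDimensional 𝕜 E] (Y : H →L[𝕜] E) :
    Y.range ≤ (Y ∘L adjoint Y).range := by
  have h : (Y ∘L adjoint Y).rangeᗮ = Y.rangeᗮ := by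
    rw [orthogonal_range, orthogonal_range, adjoint_comp, adjoint_adjoint,
      ker_self_comp_adjoint]
  calc Y.range ≤ Y.rangeᗮᗮ := Submodule.le_orthogonal_orthogonal _
    _ = (Y ∘L adjoint Y).range := by rw [← h, Submodule.orthogonal_orthogonal]

variable {Y : H →L[𝕜] E} {Q : F →L[𝕜] E} {T Tinv : F →L[𝕜] F}

theorem adjoint_comp_self_eq_one_of_gram_eq (hQ : adjoint Q ∘L Q = 1) (hT : T ∘L Tinv = 1)
    (hgram : Y ∘L adjoint Y = Q ∘L (adjoint T ∘L T) ∘L adjoint Q) :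
    adjoint (adjoint Y ∘L Q ∘L Tinv) ∘L (adjoint Y ∘L Q ∘L Tinv) = 1 := by
  have hQx (z : F) : adjoint Q (Q z) = z := congr($hQ z)
  have hgramx (z : E) : Y (adjoint Y z) = Q (adjoint T (T (adjoint Q z))) := congr($hgram z)
  have hTx (z : F) : T (Tinv z) = z := congr($hT z)
  have hTx' (z : F) : adjoint Tinv (adjoint T z) = z := congr($(adjoint_comp_adjoint_eq_one hT) z)
  ext x
  simp only [adjoint_comp, adjoint_adjoint, comp_apply, hgramx, hQx, hTx, hTx',
    one_apply_eq_self]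

theorem comp_adjoint_comp_adjoint_eq_of_gram_eq [FiniteDimensional 𝕜 E]
    (hQ : adjoint Q ∘L Q = 1) (hT₁ : T ∘L Tinv = 1) (hT₂ : Tinv ∘L T = 1)
    (hgram : Y ∘L adjoint Y = Q ∘L (adjoint T ∘L T) ∘L adjoint Q) :
    (adjoint Y ∘L Q ∘L Tinv) ∘L adjoint (adjoint Y ∘L Q ∘L Tinv) ∘L adjoint Y =
      adjoint Y := by
  have hrange : Y.range ≤ Q.range :=
    (range_le_range_comp_adjoint Y).trans (hgram ▸ LinearMap.range_comp_le_range _ _)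
  have hproj : adjoint Y ∘L Q ∘L adjoint Q = adjoint Y := by
    simpa [comp_assoc] using congr(adjoint $(comp_adjoint_comp_of_range_le hQ hrange))
  have hQx (z : F) : adjoint Q (Q z) = z := congr($hQ z)
  have hgramx (z : E) : Y (adjoint Y z) = Q (adjoint T (T (adjoint Q z))) := congr($hgram z)
  have hTx (z : F) : Tinv (T z) = z := congr($hT₂ z)
  have hTx' (z : F) : adjoint Tinv (adjoint T z) = z := congr($(adjoint_comp_adjoint_eq_one hT₁) z)
  ext x
  simp only [adjoint_comp, adjoint_adjoint, comp_apply, hgramx, hQx, hTx, hTx']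
  exact congr($hproj x)

end

theorem stmt11_general {H : Type*} [NormedAddCommGroup H] [InnerProductSpace ℝ H]
    [CompleteSpace H] {n M q : ℕ}
    (hn : 0 < n) (hM : 0 < M)
    (SM : H →L[ℝ] EuclideanSpace ℝ (Fin M))
    (D Dinv : EuclideanSpace ℝ (Fin M) →L[ℝ] EuclideanSpace ℝ (Fin M))
    (hDpos : D.IsPositive) (hD1 : D ∘L Dinv = 1)
    (Q : EuclideanSpace ℝ (Fin q) →L[ℝ] EuclideanSpace ℝ (Fin M))
    (hQ : adjoint Q ∘L Q = 1)
    (T Tinv A Ainv : EuclideanSpace ℝ (Fin q) →L[ℝ] EuclideanSpace ℝ (Fin q))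
    (hT1 : T ∘L Tinv = 1) (hT2 : Tinv ∘L T = 1)
    (hA2 : Ainv ∘L A = 1)
    (KMM : EuclideanSpace ℝ (Fin M) →L[ℝ] EuclideanSpace ℝ (Fin M))
    (hKMM : KMM = (M : ℝ) • (SM ∘L adjoint SM))
    (hfact : D ∘L KMM ∘L D = Q ∘L (adjoint T ∘L T) ∘L adjoint Q)
    (B : EuclideanSpace ℝ (Fin q) →L[ℝ] EuclideanSpace ℝ (Fin M))
    (hB : B = (Real.sqrt n)⁻¹ • (D ∘L Q ∘L Tinv ∘L Ainv))
    (V : EuclideanSpace ℝ (Fin q) →L[ℝ] H)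
    (hV : V = Real.sqrt (n * M) • (adjoint SM ∘L B ∘L A)) :
    adjoint V ∘L V = 1 ∧ V ∘L adjoint V ∘L adjoint SM = adjoint SM := by
  have hD : adjoint D = D := hDpos.isSelfAdjoint.adjoint_eq
  have hsqrtM : Real.sqrt M ≠ 0 := Real.sqrt_ne_zero'.mpr (by exact_mod_cast hM)
  set Y := Real.sqrt M • (D ∘L SM)
  have hVY : V = adjoint Y ∘L Q ∘L Tinv := by
    have hAx (x) : Ainv (A x) = x := congr($hA2 x)
    have hsqrtn : Real.sqrt n ≠ 0 := Real.sqrt_ne_zero'.mpr (by exact_mod_cast hn)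
    ext x
    simp only [hV, hB, Y, smul_apply, comp_apply, hAx, adjoint_comp, hD, map_smul, smul_smul]
    rw [Real.sqrt_mul (Nat.cast_nonneg n), mul_right_comm, mul_inv_cancel₀ hsqrtn, one_mul]
  have hgram : Y ∘L adjoint Y = Q ∘L (adjoint T ∘L T) ∘L adjoint Q := by
    rw [← hfact, hKMM]
    ext x
    simp [Y, hD, smul_smul, Real.mul_self_sqrt]
  have hVVY := comp_adjoint_comp_adjoint_eq_of_gram_eq hQ hT1 hT2 hgram
  rw [← hVY] at hVVY
  refine ⟨hVY ▸ adjoint_comp_self_eq_one_of_gram_eq hQ hT1 hgram, ?_⟩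
  ext y
  have hDy : D (Dinv y) = y := congr($hD1 y)
  simpa [Y, hD, hsqrtM, hDy] using congr($hVVY (Dinv y))

/-- Generalized FALKON preconditioner: with `K_MM = M Ŝ_M Ŝ_M*`,
`D K_MM D = Q Tᵀ T Qᵀ`, `QᵀQ = I`, `AᵀA = (1/M) T Tᵀ + λ I`,
`B = (1/√n) D Q T⁻¹ A⁻¹` and `V = √(nM) Ŝ_M* B A`, the operator `V` is a
partial isometry with `V*V = I` whose range projection fixes the range of
`Ŝ_M*`: `V V* Ŝ_M* = Ŝ_M*`. -/
theorem stmt11 {H : Type*} [NormedAddCommGroup H] [InnerProductSpace ℝ H]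
    [CompleteSpace H] [TopologicalSpace.SeparableSpace H] {n M q : ℕ}
    (hn : 0 < n) (hM : 0 < M) (lam : ℝ) (hlam : 0 < lam)
    (SM : H →L[ℝ] EuclideanSpace ℝ (Fin M))
    (D Dinv : EuclideanSpace ℝ (Fin M) →L[ℝ] EuclideanSpace ℝ (Fin M))
    (hDpos : D.IsPositive) (hD1 : D ∘L Dinv = 1) (hD2 : Dinv ∘L D = 1)
    (Q : EuclideanSpace ℝ (Fin q) →L[ℝ] EuclideanSpace ℝ (Fin M))
    (hQ : adjoint Q ∘L Q = 1)
    (T Tinv A Ainv : EuclideanSpace ℝ (Fin q) →L[ℝ] EuclideanSpace ℝ (Fin q))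
    (hT1 : T ∘L Tinv = 1) (hT2 : Tinv ∘L T = 1)
    (hA1 : A ∘L Ainv = 1) (hA2 : Ainv ∘L A = 1)
    (KMM : EuclideanSpace ℝ (Fin M) →L[ℝ] EuclideanSpace ℝ (Fin M))
    (hKMM : KMM = (M : ℝ) • (SM ∘L adjoint SM))
    (hfact : D ∘L KMM ∘L D = Q ∘L (adjoint T ∘L T) ∘L adjoint Q)
    (hrange : LinearMap.range ((Q ∘L adjoint Q :
        EuclideanSpace ℝ (Fin M) →L[ℝ] EuclideanSpace ℝ (Fin M)) :
        EuclideanSpace ℝ (Fin M) →ₗ[ℝ] EuclideanSpace ℝ (Fin M)) =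
      LinearMap.range ((D ∘L KMM ∘L D :
        EuclideanSpace ℝ (Fin M) →L[ℝ] EuclideanSpace ℝ (Fin M)) :
        EuclideanSpace ℝ (Fin M) →ₗ[ℝ] EuclideanSpace ℝ (Fin M)))
    (hAfact : adjoint A ∘L A = (M : ℝ)⁻¹ • (T ∘L adjoint T) + lam • 1)
    (B : EuclideanSpace ℝ (Fin q) →L[ℝ] EuclideanSpace ℝ (Fin M))
    (hB : B = (Real.sqrt n)⁻¹ • (D ∘L Q ∘L Tinv ∘L Ainv))
    (V : EuclideanSpace ℝ (Fin q) →L[ℝ] H)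
    (hV : V = Real.sqrt (n * M) • (adjoint SM ∘L B ∘L A)) :
    adjoint V ∘L V = 1 ∧ V ∘L adjoint V ∘L adjoint SM = adjoint SM :=
  stmt11_general hn hM SM D Dinv hDpos hD1 Q hQ T Tinv A Ainv hT1 hT2 hA2 KMM hKMM hfact B hB V hV
end

section
/- With the setup of the generalized FALKON preconditioner, the preconditioned matrix satisfies W := B^⊤ (K_nM^⊤ K_nM + λ n K_MM) B = A^{-⊤} V* (Ĉ_n + λ I) V A^{-1}, where V = √(nM) Ŝ_M* B A, K_nM = √(nM) Ŝ_n Ŝ_M*, K_MM = M Ŝ_M Ŝ_M*, and Ĉ_n = Ŝ_n* Ŝ_n. -/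
open ContinuousLinearMap

/-- Characterization of the FALKON preconditioned matrix:
`W = B^⊤ (K_nM^⊤ K_nM + λ n K_MM) B = A^{-⊤} V* (Ĉ_n + λI) V A^{-1}`,
with `K_nM = √(nM) Ŝ_n Ŝ_M*`, `K_MM = M Ŝ_M Ŝ_M*`, `Ĉ_n = Ŝ_n* Ŝ_n`,
`B = (1/√n) D Q T⁻¹ A⁻¹` and `V = √(nM) Ŝ_M* B A`. -/
theorem stmt12 {H : Type*} [NormedAddCommGroup H] [InnerProductSpace ℝ H]
    [CompleteSpace H] [TopologicalSpace.SeparableSpace H] {n M q : ℕ}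
    (hn : 0 < n) (hM : 0 < M) (lam : ℝ) (hlam : 0 < lam)
    (Sn : H →L[ℝ] EuclideanSpace ℝ (Fin n))
    (SM : H →L[ℝ] EuclideanSpace ℝ (Fin M))
    (D : EuclideanSpace ℝ (Fin M) →L[ℝ] EuclideanSpace ℝ (Fin M))
    (Q : EuclideanSpace ℝ (Fin q) →L[ℝ] EuclideanSpace ℝ (Fin M))
    (T Tinv A Ainv : EuclideanSpace ℝ (Fin q) →L[ℝ] EuclideanSpace ℝ (Fin q))
    (hT1 : T ∘L Tinv = 1) (hT2 : Tinv ∘L T = 1)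
    (hA1 : A ∘L Ainv = 1) (hA2 : Ainv ∘L A = 1)
    (KnM : EuclideanSpace ℝ (Fin M) →L[ℝ] EuclideanSpace ℝ (Fin n))
    (hKnM : KnM = Real.sqrt (n * M) • (Sn ∘L adjoint SM))
    (KMM : EuclideanSpace ℝ (Fin M) →L[ℝ] EuclideanSpace ℝ (Fin M))
    (hKMM : KMM = (M : ℝ) • (SM ∘L adjoint SM))
    (Cn : H →L[ℝ] H) (hCn : Cn = adjoint Sn ∘L Sn)
    (B : EuclideanSpace ℝ (Fin q) →L[ℝ] EuclideanSpace ℝ (Fin M))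
    (hB : B = (Real.sqrt n)⁻¹ • (D ∘L Q ∘L Tinv ∘L Ainv))
    (V : EuclideanSpace ℝ (Fin q) →L[ℝ] H)
    (hV : V = Real.sqrt (n * M) • (adjoint SM ∘L B ∘L A)) :
    adjoint B ∘L ((adjoint KnM ∘L KnM) + (lam * n) • KMM) ∘L B =
      adjoint Ainv ∘L (adjoint V ∘L (Cn + lam • 1) ∘L V) ∘L Ainv := by
  have hs : Real.sqrt (n*M) * Real.sqrt (n*M) = (n:ℝ)*M := Real.mul_self_sqrt (by positivity)
  subst hKnM hKMM hCn hV
  have h1 : adjoint Ainv ∘L adjoint A = 1 := by rw [← adjoint_comp, hA1, ← star_eq_adjoint, star_one]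
  simp only [map_smulₛₗ, RingHom.id_apply, starRingEnd_apply, star_trivial, adjoint_comp,
    adjoint_adjoint, smul_comp, comp_smul, add_comp, comp_add, smul_smul,
    comp_assoc, one_def, comp_id, id_comp, smul_add]
  have h2 : Real.sqrt (n*M) * lam * Real.sqrt (n*M) = lam * n * M := by
    rw [mul_comm _ lam, mul_assoc, hs]; ring
  simp only [hA1, one_def, comp_id, ← comp_assoc, h1, id_comp, hs, h2]
end

section
/- In the FALKON setting, with W = A^{-⊤}(V* Ĉ_n V + λI)A^{-1} and B the preconditioner, one has M · Ŝ_M* B W^{-1} B^⊤ Ŝ_M = (1/n) V (V* Ĉ_n V + λ I)^{-1} V*. -/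
set_option maxHeartbeats 1000000


open ContinuousLinearMap

/-- FALKON identity:
`M · Ŝ_M* B W⁻¹ B^⊤ Ŝ_M = (1/n) V (V* Ĉ_n V + λI)⁻¹ V*`, with
`B = (1/√n) D Q T⁻¹ A⁻¹`, `V = √(nM) Ŝ_M* B A` an isometry, and
`W = A^{-⊤}(V* Ĉ_n V + λI)A^{-1}`. -/
theorem stmt16 {H : Type*} [NormedAddCommGroup H] [InnerProductSpace ℝ H]
    [CompleteSpace H] [TopologicalSpace.SeparableSpace H] {n M q : ℕ}
    (hn : 0 < n) (hM : 0 < M) (lam : ℝ) (hlam : 0 < lam)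
    (SM : H →L[ℝ] EuclideanSpace ℝ (Fin M))
    (D : EuclideanSpace ℝ (Fin M) →L[ℝ] EuclideanSpace ℝ (Fin M))
    (Q : EuclideanSpace ℝ (Fin q) →L[ℝ] EuclideanSpace ℝ (Fin M))
    (T Tinv A Ainv : EuclideanSpace ℝ (Fin q) →L[ℝ] EuclideanSpace ℝ (Fin q))
    (hT1 : T ∘L Tinv = 1) (hT2 : Tinv ∘L T = 1)
    (hA1 : A ∘L Ainv = 1) (hA2 : Ainv ∘L A = 1)
    (Cn : H →L[ℝ] H) (hCn : Cn.IsPositive)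
    (B : EuclideanSpace ℝ (Fin q) →L[ℝ] EuclideanSpace ℝ (Fin M))
    (hB : B = (Real.sqrt n)⁻¹ • (D ∘L Q ∘L Tinv ∘L Ainv))
    (V : EuclideanSpace ℝ (Fin q) →L[ℝ] H)
    (hV : V = Real.sqrt (n * M) • (adjoint SM ∘L B ∘L A))
    (hVV : adjoint V ∘L V = 1)
    (W Wi Ni : EuclideanSpace ℝ (Fin q) →L[ℝ] EuclideanSpace ℝ (Fin q))
    (hW : W = adjoint Ainv ∘L (adjoint V ∘L Cn ∘L V + lam • 1) ∘L Ainv)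
    (hWi1 : W ∘L Wi = 1) (hWi2 : Wi ∘L W = 1)
    (hNi1 : (adjoint V ∘L Cn ∘L V + lam • 1) ∘L Ni = 1)
    (hNi2 : Ni ∘L (adjoint V ∘L Cn ∘L V + lam • 1) = 1) :
    (M : ℝ) • (adjoint SM ∘L B ∘L Wi ∘L adjoint B ∘L SM) =
      (n : ℝ)⁻¹ • (V ∘L Ni ∘L adjoint V) := by

  have hnM : (0:ℝ) < (n:ℝ) * M := by positivity
  have hs : Real.sqrt ((n:ℝ) * M) ≠ 0 := by positivity
  set c : ℝ := Real.sqrt ((n:ℝ) * M) with hc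
  have hadjone : adjoint (1 : EuclideanSpace ℝ (Fin q) →L[ℝ] EuclideanSpace ℝ (Fin q)) = 1 := by
    rw [one_def, adjoint_id]
  -- V ∘L Ainv = c • (adjoint SM ∘L B)
  have hVA : V ∘L Ainv = c • (adjoint SM ∘L B) := by
    rw [hV]
    simp only [smul_comp, comp_assoc, hA1, comp_id]
    norm_cast
  have hSB : adjoint SM ∘L B = c⁻¹ • (V ∘L Ainv) := by
    rw [hVA, inv_smul_smul₀ hs]
  have hBS : adjoint B ∘L SM = c⁻¹ • (adjoint Ainv ∘L adjoint V) := by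
    have := congrArg ContinuousLinearMap.adjoint hSB
    simpa [adjoint_comp, adjoint_adjoint] using this
  have hAadj1 : adjoint A ∘L adjoint Ainv = 1 := by
    rw [← adjoint_comp, hA2, hadjone]
  have hAadj2 : adjoint Ainv ∘L adjoint A = 1 := by
    rw [← adjoint_comp, hA1, hadjone]
  have hX : (A ∘L Ni ∘L adjoint A) ∘L W = 1 := by
    rw [hW]
    calc (A ∘L Ni ∘L adjoint A) ∘L (adjoint Ainv ∘L (adjoint V ∘L Cn ∘L V + lam • 1) ∘L Ainv)
        = A ∘L Ni ∘L (adjoint A ∘L adjoint Ainv) ∘L (adjoint V ∘L Cn ∘L V + lam • 1) ∘L Ainv := by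
          simp only [comp_assoc]
      _ = A ∘L (Ni ∘L (adjoint V ∘L Cn ∘L V + lam • 1)) ∘L Ainv := by
          rw [hAadj1]; simp only [one_def, id_comp, comp_id, comp_assoc]
      _ = 1 := by rw [hNi2]; simp only [one_def, id_comp, comp_id, comp_assoc]; rw [← one_def, hA1]
  have hWieq : Wi = A ∘L Ni ∘L adjoint A := by
    calc Wi = ((A ∘L Ni ∘L adjoint A) ∘L W) ∘L Wi := by rw [hX]; simp only [one_def, id_comp, comp_id]
      _ = (A ∘L Ni ∘L adjoint A) ∘L (W ∘L Wi) := by rw [comp_assoc]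
      _ = A ∘L Ni ∘L adjoint A := by rw [hWi1]; simp only [one_def, comp_id]
  have key : adjoint SM ∘L B ∘L Wi ∘L adjoint B ∘L SM
      = (c⁻¹ * c⁻¹) • (V ∘L Ni ∘L adjoint V) := by
    rw [← comp_assoc (adjoint SM) B, hSB, hWieq, hBS]
    simp only [smul_comp, comp_smul, comp_assoc, smul_smul]
    congr 1
    rw [← comp_assoc Ainv A, hA2]; simp only [one_def, id_comp, comp_id]
    congr 2
    rw [← comp_assoc (adjoint A) (adjoint Ainv), hAadj1]; simp only [one_def, id_comp, comp_id]
  rw [key, smul_smul]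
  congr 1
  rw [← mul_inv, hc, Real.mul_self_sqrt hnM.le, mul_inv]
  have hM' : (M:ℝ) ≠ 0 := by positivity
  field_simp
end

section
/- In the FALKON setting, with S : H → L² bounded, C = S*S, Ĉ_n = Ŝ_n* Ŝ_n, and W, B, V as above, one has √M ‖S Ŝ_M* B W^{-1/2}‖ ≤ n^{-1/2} ‖S (Ĉ_n + λ I)^{-1/2}‖. -/
/-!
Write `K = Ĉ_n + λI`, so that `J = (Ĉ_n + λI)^{-1/2}` satisfies `J² K = 1`, and put
`Y = V A⁻¹ W^{-1/2}`. Since `V` is an isometry, `Y* K Y = W^{-1/2} W W^{-1/2} = 1`, and then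
`X = J K Y` is an isometry with `Y = J X`. The definition of `V` gives
`√(nM) Ŝ_M* B W^{-1/2} = Y`, hence `√(nM) ‖S Ŝ_M* B W^{-1/2}‖ = ‖S J X‖ ≤ ‖S J‖`.
-/

open ContinuousLinearMap

theorem mul_mul_eq_one_of_mul_self_mul_eq_one {M : Type*} [Monoid M] {a w : M}
    (h₁ : a * a * w = 1) (h₂ : w * (a * a) = 1) : a * w * a = 1 := by
  have hcomm : w * a = a * w :=
    calc w * a = w * a * (a * a * w) := by rw [h₁, mul_one]
      _ = w * (a * a) * (a * w) := by simp only [mul_assoc]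
      _ = a * w := by rw [h₂, one_mul]
  rw [mul_assoc, hcomm, ← mul_assoc, h₁]

namespace ContinuousLinearMap

variable {𝕜 E H F : Type*} [RCLike 𝕜]
  [NormedAddCommGroup E] [InnerProductSpace 𝕜 E] [CompleteSpace E]
  [NormedAddCommGroup H] [InnerProductSpace 𝕜 H] [CompleteSpace H]
  [NormedAddCommGroup F] [NormedSpace 𝕜 F]

theorem opNorm_le_one_of_adjoint_comp_self {X : E →L[𝕜] H} (hX : adjoint X ∘L X = 1) :
    ‖X‖ ≤ 1 :=
  opNorm_le_bound X zero_le_one fun x => by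
    rw [X.norm_map_iff_adjoint_comp_self.mpr hX, one_mul]

theorem adjoint_comp_add_smul_one_comp {V : E →L[𝕜] H} (hV : adjoint V ∘L V = 1)
    (C : H →L[𝕜] H) (c : 𝕜) :
    adjoint V ∘L (C + c • 1) ∘L V = adjoint V ∘L C ∘L V + c • 1 := by
  rw [add_comp, comp_add, smul_comp, comp_smul, one_def, id_comp, hV]

/-- `Y = J X`, where `X = J K Y` is an isometry because `K* J² = (J² K)* = 1`. -/
theorem opNorm_comp_le_of_adjoint_comp_comp_eq_one (T : H →L[𝕜] F) {J K : H →L[𝕜] H}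
    (hJ : IsSelfAdjoint J) (hJK : (J ∘L J) ∘L K = 1) {Y : E →L[𝕜] H}
    (hY : adjoint Y ∘L K ∘L Y = 1) : ‖T ∘L Y‖ ≤ ‖T ∘L J‖ := by
  set X := J ∘L K ∘L Y
  have hKJ : adjoint K ∘L J ∘L J = 1 := by
    simpa [adjoint_comp, hJ.adjoint_eq, comp_assoc, adjoint_one] using congrArg adjoint hJK
  have hX : adjoint X ∘L X = 1 := by
    calc adjoint X ∘L X = adjoint Y ∘L (adjoint K ∘L J ∘L J) ∘L K ∘L Y := by
          simp only [X, adjoint_comp, hJ.adjoint_eq, comp_assoc]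
      _ = 1 := by rw [hKJ, one_def, id_comp, hY]
  have hYX : Y = J ∘L X :=
    calc Y = ((J ∘L J) ∘L K) ∘L Y := by rw [hJK, one_def, id_comp]
      _ = J ∘L X := by simp only [X, comp_assoc]
  calc ‖T ∘L Y‖ = ‖(T ∘L J) ∘L X‖ := by rw [hYX, comp_assoc]
    _ ≤ ‖T ∘L J‖ * ‖X‖ := opNorm_comp_le _ _
    _ ≤ ‖T ∘L J‖ :=
        mul_le_of_le_one_right (norm_nonneg _) (opNorm_le_one_of_adjoint_comp_self hX)

end ContinuousLinearMap

theorem stmt17_general {H L2 : Type*} [NormedAddCommGroup H] [InnerProductSpace ℝ H]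
    [CompleteSpace H]
    [NormedAddCommGroup L2] [InnerProductSpace ℝ L2]
    {n M q : ℕ} (hn : 0 < n) (lam : ℝ)
    (S : H →L[ℝ] L2)
    (SM : H →L[ℝ] EuclideanSpace ℝ (Fin M))
    (A Ainv : EuclideanSpace ℝ (Fin q) →L[ℝ] EuclideanSpace ℝ (Fin q))
    (hA1 : A ∘L Ainv = 1)
    (Cn : H →L[ℝ] H)
    (B : EuclideanSpace ℝ (Fin q) →L[ℝ] EuclideanSpace ℝ (Fin M))
    (V : EuclideanSpace ℝ (Fin q) →L[ℝ] H)
    (hV : V = Real.sqrt (n * M) • (adjoint SM ∘L B ∘L A))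
    (hVV : adjoint V ∘L V = 1)
    (W Wh : EuclideanSpace ℝ (Fin q) →L[ℝ] EuclideanSpace ℝ (Fin q))
    (hW : W = adjoint Ainv ∘L (adjoint V ∘L Cn ∘L V + lam • 1) ∘L Ainv)
    (hWhpos : Wh.IsPositive)
    (hWh1 : (Wh ∘L Wh) ∘L W = 1) (hWh2 : W ∘L (Wh ∘L Wh) = 1)
    (Jn : H →L[ℝ] H) (hJnpos : Jn.IsPositive)
    (hJn1 : (Jn ∘L Jn) ∘L (Cn + lam • 1) = 1) :
    Real.sqrt M * ‖S ∘L adjoint SM ∘L B ∘L Wh‖ ≤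
      (Real.sqrt n)⁻¹ * ‖S ∘L Jn‖ := by
  set Y := V ∘L Ainv ∘L Wh
  have hWhW : (Wh ∘L W) ∘L Wh = 1 := mul_mul_eq_one_of_mul_self_mul_eq_one hWh1 hWh2
  have hY : adjoint Y ∘L (Cn + lam • 1) ∘L Y = 1 :=
    calc adjoint Y ∘L (Cn + lam • 1) ∘L Y
        = Wh ∘L (adjoint Ainv ∘L (adjoint V ∘L (Cn + lam • 1) ∘L V) ∘L Ainv) ∘L Wh := by
          simp only [Y, adjoint_comp, hWhpos.isSelfAdjoint.adjoint_eq, comp_assoc]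
      _ = 1 := by rw [adjoint_comp_add_smul_one_comp hVV, ← hW, ← comp_assoc, hWhW]
  have hSY : Real.sqrt (n * M) • (S ∘L adjoint SM ∘L B ∘L Wh) = S ∘L Y := by
    have hVA : V ∘L Ainv = Real.sqrt (n * M) • (adjoint SM ∘L B) := by
      rw [hV, smul_comp, comp_assoc, comp_assoc, hA1, one_def, comp_id]
    rw [show Y = (V ∘L Ainv) ∘L Wh from (comp_assoc _ _ _).symm, hVA, smul_comp, comp_smul,
      comp_assoc]
  have hsn : 0 < Real.sqrt n := Real.sqrt_pos.mpr (Nat.cast_pos.mpr hn)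
  rw [le_inv_mul_iff₀ hsn]
  calc Real.sqrt n * (Real.sqrt M * ‖S ∘L adjoint SM ∘L B ∘L Wh‖) = ‖S ∘L Y‖ := by
        rw [← hSY, norm_smul, Real.norm_of_nonneg (Real.sqrt_nonneg _),
          Real.sqrt_mul (Nat.cast_nonneg n), mul_assoc]
    _ ≤ ‖S ∘L Jn‖ :=
        opNorm_comp_le_of_adjoint_comp_comp_eq_one S hJnpos.isSelfAdjoint hJn1 hY

/-- FALKON bound: `√M ‖S Ŝ_M* B W^{-1/2}‖ ≤ n^{-1/2} ‖S (Ĉ_n + λI)^{-1/2}‖`,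
where `S : H → L²` is bounded, `Ĉ_n = Ŝ_n* Ŝ_n`, `B`, `V`, `W` are as in the
generalized FALKON preconditioner, `Wh` is the positive square root of `W⁻¹`
and `Jn` the positive square root of `(Ĉ_n + λI)⁻¹`. -/
theorem stmt17 {H L2 : Type*} [NormedAddCommGroup H] [InnerProductSpace ℝ H]
    [CompleteSpace H] [TopologicalSpace.SeparableSpace H]
    [NormedAddCommGroup L2] [InnerProductSpace ℝ L2] [CompleteSpace L2]
    {n M q : ℕ} (hn : 0 < n) (hM : 0 < M) (lam : ℝ) (hlam : 0 < lam)
    (S : H →L[ℝ] L2)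
    (Sn : H →L[ℝ] EuclideanSpace ℝ (Fin n))
    (SM : H →L[ℝ] EuclideanSpace ℝ (Fin M))
    (D : EuclideanSpace ℝ (Fin M) →L[ℝ] EuclideanSpace ℝ (Fin M))
    (Q : EuclideanSpace ℝ (Fin q) →L[ℝ] EuclideanSpace ℝ (Fin M))
    (T Tinv A Ainv : EuclideanSpace ℝ (Fin q) →L[ℝ] EuclideanSpace ℝ (Fin q))
    (hT1 : T ∘L Tinv = 1) (hT2 : Tinv ∘L T = 1)
    (hA1 : A ∘L Ainv = 1) (hA2 : Ainv ∘L A = 1)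
    (Cn : H →L[ℝ] H) (hCn : Cn = adjoint Sn ∘L Sn)
    (B : EuclideanSpace ℝ (Fin q) →L[ℝ] EuclideanSpace ℝ (Fin M))
    (hB : B = (Real.sqrt n)⁻¹ • (D ∘L Q ∘L Tinv ∘L Ainv))
    (V : EuclideanSpace ℝ (Fin q) →L[ℝ] H)
    (hV : V = Real.sqrt (n * M) • (adjoint SM ∘L B ∘L A))
    (hVV : adjoint V ∘L V = 1)
    (W Wh : EuclideanSpace ℝ (Fin q) →L[ℝ] EuclideanSpace ℝ (Fin q))
    (hW : W = adjoint Ainv ∘L (adjoint V ∘L Cn ∘L V + lam • 1) ∘L Ainv)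
    (hWhpos : Wh.IsPositive)
    (hWh1 : (Wh ∘L Wh) ∘L W = 1) (hWh2 : W ∘L (Wh ∘L Wh) = 1)
    (Jn : H →L[ℝ] H) (hJnpos : Jn.IsPositive)
    (hJn1 : (Jn ∘L Jn) ∘L (Cn + lam • 1) = 1)
    (hJn2 : (Cn + lam • 1) ∘L (Jn ∘L Jn) = 1) :
    Real.sqrt M * ‖S ∘L adjoint SM ∘L B ∘L Wh‖ ≤
      (Real.sqrt n)⁻¹ * ‖S ∘L Jn‖ :=
  stmt17_general hn lam S SM A Ainv hA1 Cn B V hV hVV W Wh hW hWhpos hWh1 hWh2 Jn hJnpos hJn1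
end

section
/- In the FALKON setting, let β_∞ = W^{-1} B^⊤ K_nM^⊤ ŷ for ŷ ∈ ℝ^n. Then ‖W^{1/2} β_∞‖ ≤ ‖ŷ‖. -/
open ContinuousLinearMap

/-!
Put `w = W⁻¹ B^⊤ K_nM^⊤ ŷ`, `v = A⁻¹ w` and `r = Ŝ_n V v`. Since `K_nM B = Ŝ_n V A⁻¹`,
`‖W^{1/2} w‖² = ⟪W w, w⟫ = ⟪ŷ, r⟫ ≤ ‖ŷ‖ ‖r‖`, while the same quadratic form equals
`‖r‖² + λ ‖v‖² ≥ ‖r‖²`. Hence `‖W^{1/2} w‖² ≤ ‖ŷ‖ ‖W^{1/2} w‖`.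
-/

section

variable {E F G : Type*} [NormedAddCommGroup E] [InnerProductSpace ℝ E]
  [NormedAddCommGroup F] [InnerProductSpace ℝ F] [NormedAddCommGroup G] [InnerProductSpace ℝ G]

theorem le_norm_of_sq_le_inner_of_norm_le {a : ℝ} (ha : 0 ≤ a) {y r : F}
    (hsq : a ^ 2 ≤ inner ℝ y r) (hr : ‖r‖ ≤ a) : a ≤ ‖y‖ := by
  have h : a * a ≤ ‖y‖ * a :=
    calc a * a = a ^ 2 := (sq a).symm
      _ ≤ inner ℝ y r := hsq
      _ ≤ ‖y‖ * ‖r‖ := real_inner_le_norm y r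
      _ ≤ ‖y‖ * a := mul_le_mul_of_nonneg_left hr (norm_nonneg y)
  rcases ha.eq_or_lt with rfl | hpos
  · exact norm_nonneg y
  · exact le_of_mul_le_mul_right h hpos

variable [CompleteSpace E]

theorem norm_sq_apply_eq_inner_comp_self_apply_of_isSelfAdjoint {T : E →L[ℝ] E}
    (hT : IsSelfAdjoint T) (x : E) : ‖T x‖ ^ 2 = inner ℝ ((T ∘L T) x) x := by
  rw [← real_inner_self_eq_norm_sq, comp_apply]
  exact (hT.isSymmetric (T x) x).symm

variable [CompleteSpace F] [CompleteSpace G]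

theorem inner_conj_gram_add_smul_one_apply_self (P : E →L[ℝ] E) (V : E →L[ℝ] F) (S : F →L[ℝ] G)
    (lam : ℝ) (x : E) :
    inner ℝ ((adjoint P ∘L (adjoint V ∘L (adjoint S ∘L S) ∘L V + lam • 1) ∘L P) x) x
      = ‖S (V (P x))‖ ^ 2 + lam * ‖P x‖ ^ 2 := by
  simp only [comp_apply, add_apply, smul_apply, one_apply_eq_self, adjoint_inner_left,
    inner_add_left, real_inner_smul_left, real_inner_self_eq_norm_sq]

end

theorem stmt18_general {H : Type*} [NormedAddCommGroup H] [InnerProductSpace ℝ H]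
    [CompleteSpace H] {n M q : ℕ}
    (lam : ℝ) (hlam : 0 < lam)
    (Sn : H →L[ℝ] EuclideanSpace ℝ (Fin n))
    (SM : H →L[ℝ] EuclideanSpace ℝ (Fin M))
    (A Ainv : EuclideanSpace ℝ (Fin q) →L[ℝ] EuclideanSpace ℝ (Fin q))
    (hA1 : A ∘L Ainv = 1)
    (KnM : EuclideanSpace ℝ (Fin M) →L[ℝ] EuclideanSpace ℝ (Fin n))
    (hKnM : KnM = Real.sqrt (n * M) • (Sn ∘L adjoint SM))
    (Cn : H →L[ℝ] H) (hCn : Cn = adjoint Sn ∘L Sn)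
    (B : EuclideanSpace ℝ (Fin q) →L[ℝ] EuclideanSpace ℝ (Fin M))
    (V : EuclideanSpace ℝ (Fin q) →L[ℝ] H)
    (hV : V = Real.sqrt (n * M) • (adjoint SM ∘L B ∘L A))
    (W Wi Wh : EuclideanSpace ℝ (Fin q) →L[ℝ] EuclideanSpace ℝ (Fin q))
    (hW : W = adjoint Ainv ∘L (adjoint V ∘L Cn ∘L V + lam • 1) ∘L Ainv)
    (hWi1 : W ∘L Wi = 1)
    (hWhpos : Wh.IsPositive) (hWh : Wh ∘L Wh = W)
    (y : EuclideanSpace ℝ (Fin n)) :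
    ‖Wh (Wi (adjoint B (adjoint KnM y)))‖ ≤ ‖y‖ := by
  set w := Wi (adjoint B (adjoint KnM y))
  have hWw : W w = adjoint B (adjoint KnM y) := by simpa using DFunLike.congr_fun hWi1 _
  have hKB : KnM (B w) = Sn (V (Ainv w)) := by
    have hAw : A (Ainv w) = w := by simpa using DFunLike.congr_fun hA1 w
    simp [hKnM, hV, hAw]
  have hWh_sq : ‖Wh w‖ ^ 2 = inner ℝ (W w) w := by
    rw [← hWh]
    exact norm_sq_apply_eq_inner_comp_self_apply_of_isSelfAdjoint hWhpos.isSelfAdjoint w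
  refine le_norm_of_sq_le_inner_of_norm_le (norm_nonneg _) (r := Sn (V (Ainv w))) ?_ ?_
  · rw [hWh_sq, hWw, adjoint_inner_left, adjoint_inner_left, hKB]
  · refine (pow_le_pow_iff_left₀ (norm_nonneg _) (norm_nonneg _) two_ne_zero).1 ?_
    rw [hWh_sq, hW, hCn, inner_conj_gram_add_smul_one_apply_self]
    exact le_add_of_nonneg_right (by positivity)

/-- FALKON: for `β_∞ = W⁻¹ B^⊤ K_nM^⊤ ŷ`, one has `‖W^{1/2} β_∞‖ ≤ ‖ŷ‖`, with
`K_nM = √(nM) Ŝ_n Ŝ_M*`, `Ĉ_n = Ŝ_n* Ŝ_n`, `V = √(nM) Ŝ_M* B A` an isometry,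
`W = A^{-⊤}(V* Ĉ_n V + λI)A^{-1}` positive definite, and `Wh` the positive
square root of `W`. -/
theorem stmt18 {H : Type*} [NormedAddCommGroup H] [InnerProductSpace ℝ H]
    [CompleteSpace H] [TopologicalSpace.SeparableSpace H] {n M q : ℕ}
    (hn : 0 < n) (hM : 0 < M) (lam : ℝ) (hlam : 0 < lam)
    (Sn : H →L[ℝ] EuclideanSpace ℝ (Fin n))
    (SM : H →L[ℝ] EuclideanSpace ℝ (Fin M))
    (D : EuclideanSpace ℝ (Fin M) →L[ℝ] EuclideanSpace ℝ (Fin M))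
    (Q : EuclideanSpace ℝ (Fin q) →L[ℝ] EuclideanSpace ℝ (Fin M))
    (T Tinv A Ainv : EuclideanSpace ℝ (Fin q) →L[ℝ] EuclideanSpace ℝ (Fin q))
    (hT1 : T ∘L Tinv = 1) (hT2 : Tinv ∘L T = 1)
    (hA1 : A ∘L Ainv = 1) (hA2 : Ainv ∘L A = 1)
    (KnM : EuclideanSpace ℝ (Fin M) →L[ℝ] EuclideanSpace ℝ (Fin n))
    (hKnM : KnM = Real.sqrt (n * M) • (Sn ∘L adjoint SM))
    (Cn : H →L[ℝ] H) (hCn : Cn = adjoint Sn ∘L Sn)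
    (B : EuclideanSpace ℝ (Fin q) →L[ℝ] EuclideanSpace ℝ (Fin M))
    (hB : B = (Real.sqrt n)⁻¹ • (D ∘L Q ∘L Tinv ∘L Ainv))
    (V : EuclideanSpace ℝ (Fin q) →L[ℝ] H)
    (hV : V = Real.sqrt (n * M) • (adjoint SM ∘L B ∘L A))
    (hVV : adjoint V ∘L V = 1)
    (W Wi Wh : EuclideanSpace ℝ (Fin q) →L[ℝ] EuclideanSpace ℝ (Fin q))
    (hW : W = adjoint Ainv ∘L (adjoint V ∘L Cn ∘L V + lam • 1) ∘L Ainv)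
    (hWi1 : W ∘L Wi = 1) (hWi2 : Wi ∘L W = 1)
    (hWhpos : Wh.IsPositive) (hWh : Wh ∘L Wh = W)
    (y : EuclideanSpace ℝ (Fin n)) :
    ‖Wh (Wi (adjoint B (adjoint KnM y)))‖ ≤ ‖y‖ :=
  stmt18_general lam hlam Sn SM A Ainv hA1 KnM hKnM Cn hCn B V hV W Wi Wh hW hWi1 hWhpos hWh y
end

section
/- Let ρ be a probability measure on X × ℝ with ∫ y² dρ < ∞, S : H → L²(X, ρ_X) the canonical inclusion of an RKHS H with bounded kernel, f_ρ(x) = ∫ y dρ(y|x) the regression function, and P the orthogonal projection in L²(X, ρ_X) onto the closure of the range of S. Then for any f̂ ∈ H, E(Sf̂) - inf_{f ∈ H} E(Sf) = ‖S f̂ - P f_ρ‖²_{ρ_X}, where E(g) = ∫ (g(x) - y)² dρ(x, y). -/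
open MeasureTheory

section aux
set_option linter.unusedSectionVars false
variable {X : Type*} [MeasurableSpace X] (ρ : Measure (X × ℝ)) [IsProbabilityMeasure ρ]

lemma aux_meas (w : Lp ℝ 2 ρ.fst) : AEStronglyMeasurable (fun p : X × ℝ => w p.1) ρ :=
  (Lp.aestronglyMeasurable w).comp_measurable measurable_fst

lemma aux_int_fst (g : X → ℝ) (hg : Integrable g ρ.fst) :
    Integrable (fun p : X × ℝ => g p.1) ρ :=
  (integrable_map_measure (μ := ρ) (f := Prod.fst) hg.1
    measurable_fst.aemeasurable).mp hg

lemma aux_int_sq (w : Lp ℝ 2 ρ.fst) : Integrable (fun p : X × ℝ => (w p.1) ^ 2) ρ := by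
  have h1 : Integrable (fun x => w x * w x) ρ.fst := L2.integrable_inner (𝕜 := ℝ) w w
  simpa [sq] using aux_int_fst ρ _ h1

lemma aux_norm_sq (w : Lp ℝ 2 ρ.fst) : ‖w‖ ^ 2 = ∫ x, (w x) ^ 2 ∂ρ.fst := by
  rw [← real_inner_self_eq_norm_sq, L2.inner_def]
  simp [sq, RCLike.inner_apply]
end aux

section decomp
set_option linter.unusedSectionVars false
variable {X : Type*} [MeasurableSpace X] (ρ : Measure (X × ℝ)) [IsProbabilityMeasure ρ]

lemma aux_decomp (hy2 : Integrable (fun p : X × ℝ => p.2 ^ 2) ρ)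
    (fρ : Lp ℝ 2 ρ.fst) (hfρ : ∀ᵐ x ∂ρ.fst, fρ x = ∫ y, y ∂(ρ.condKernel x))
    (w : Lp ℝ 2 ρ.fst) :
    ∫ p, ((w : X → ℝ) p.1 - p.2) ^ 2 ∂ρ
      = ‖w - fρ‖ ^ 2 + ∫ p, ((fρ : X → ℝ) p.1 - p.2) ^ 2 ∂ρ := by
  have hmw : AEStronglyMeasurable (fun p : X × ℝ => w p.1) ρ := aux_meas ρ w
  have hmf : AEStronglyMeasurable (fun p : X × ℝ => fρ p.1) ρ := aux_meas ρ fρ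
  have hms : AEStronglyMeasurable (fun p : X × ℝ => p.2) ρ :=
    measurable_snd.aestronglyMeasurable
  have int_fsq := aux_int_sq ρ fρ
  have hIres : Integrable (fun p : X × ℝ => (fρ p.1 - p.2) ^ 2) ρ := by
    have hb : Integrable (fun p : X × ℝ => 2 * (fρ p.1) ^ 2 + 2 * p.2 ^ 2) ρ :=
      (int_fsq.const_mul 2).add (hy2.const_mul 2)
    refine Integrable.mono' hb ((hmf.sub hms).pow 2)
      (Filter.Eventually.of_forall fun p => ?_)
    rw [Real.norm_eq_abs, abs_of_nonneg (sq_nonneg _)]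
    nlinarith [sq_nonneg (fρ p.1 + p.2)]
  have hd1 : Integrable (fun x => ((w : X → ℝ) x - fρ x) ^ 2) ρ.fst := by
    have h0 : Integrable (fun x => ((w - fρ : Lp ℝ 2 ρ.fst) : X → ℝ) x ^ 2) ρ.fst := by
      simpa [sq] using L2.integrable_inner (𝕜 := ℝ) (w - fρ) (w - fρ)
    refine h0.congr ?_
    filter_upwards [Lp.coeFn_sub w fρ] with x hx
    simp only [hx, Pi.sub_apply]
  have hdiff : Integrable (fun p : X × ℝ => ((w : X → ℝ) p.1 - fρ p.1) ^ 2) ρ :=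
    aux_int_fst ρ _ hd1
  have hnorm : ‖w - fρ‖ ^ 2 = ∫ p, ((w : X → ℝ) p.1 - fρ p.1) ^ 2 ∂ρ := by
    rw [aux_norm_sq]
    have h1 : ∫ x, ((w - fρ : Lp ℝ 2 ρ.fst) : X → ℝ) x ^ 2 ∂ρ.fst
        = ∫ x, ((w : X → ℝ) x - fρ x) ^ 2 ∂ρ.fst := by
      refine integral_congr_ae ?_
      filter_upwards [Lp.coeFn_sub w fρ] with x hx
      simp only [hx, Pi.sub_apply]
    rw [h1]
    exact integral_map (μ := ρ) (φ := Prod.fst)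
      (f := fun x => ((w : X → ℝ) x - fρ x) ^ 2) measurable_fst.aemeasurable
      (((Lp.aestronglyMeasurable w).sub (Lp.aestronglyMeasurable fρ)).pow 2)
  have hcross : Integrable
      (fun p : X × ℝ => ((w : X → ℝ) p.1 - fρ p.1) * (fρ p.1 - p.2)) ρ := by
    have hb : Integrable
        (fun p : X × ℝ => ((w : X → ℝ) p.1 - fρ p.1) ^ 2 + (fρ p.1 - p.2) ^ 2) ρ :=
      hdiff.add hIres
    refine Integrable.mono' hb ((hmw.sub hmf).mul (hmf.sub hms))
      (Filter.Eventually.of_forall fun p => ?_)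
    rw [Real.norm_eq_abs, abs_mul]
    nlinarith [sq_nonneg (|w p.1 - fρ p.1| - |fρ p.1 - p.2|), abs_nonneg (w p.1 - fρ p.1),
      abs_nonneg (fρ p.1 - p.2), sq_abs (w p.1 - fρ p.1), sq_abs (fρ p.1 - p.2)]
  have hyint : Integrable (fun p : X × ℝ => p.2) ρ := by
    have hb : Integrable (fun p : X × ℝ => 1 + p.2 ^ 2) ρ := (integrable_const 1).add hy2
    refine Integrable.mono' hb hms (Filter.Eventually.of_forall fun p => ?_)
    rw [Real.norm_eq_abs]
    rcases le_or_gt |p.2| 1 with h | h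
    · nlinarith [sq_nonneg p.2]
    · nlinarith [sq_abs p.2]
  have hyae : ∀ᵐ x ∂ρ.fst, Integrable (fun y : ℝ => y) (ρ.condKernel x) :=
    hyint.condKernel_ae
  have hcross0 : ∫ p, ((w : X → ℝ) p.1 - fρ p.1) * (fρ p.1 - p.2) ∂ρ = 0 := by
    rw [← Measure.integral_condKernel hcross]
    have this1 : ∀ᵐ x ∂ρ.fst,
        ∫ y, ((w : X → ℝ) x - fρ x) * (fρ x - y) ∂(ρ.condKernel x) = 0 := by
      filter_upwards [hfρ, hyae] with x hx hxint
      rw [integral_const_mul, integral_sub (integrable_const _) hxint]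
      simp [hx]
    rw [integral_congr_ae this1, integral_zero]
  have h2int : Integrable
      (fun p : X × ℝ => 2 * (((w : X → ℝ) p.1 - fρ p.1) * (fρ p.1 - p.2))) ρ :=
    hcross.const_mul 2
  have h23 : Integrable
      (fun p : X × ℝ => 2 * (((w : X → ℝ) p.1 - fρ p.1) * (fρ p.1 - p.2))
        + (fρ p.1 - p.2) ^ 2) ρ := h2int.add hIres
  calc ∫ p, ((w : X → ℝ) p.1 - p.2) ^ 2 ∂ρ
      = ∫ p, (((w : X → ℝ) p.1 - fρ p.1) ^ 2
        + (2 * (((w : X → ℝ) p.1 - fρ p.1) * (fρ p.1 - p.2))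
          + (fρ p.1 - p.2) ^ 2)) ∂ρ := by
        refine integral_congr_ae (Filter.Eventually.of_forall fun p => ?_)
        ring
    _ = (∫ p, ((w : X → ℝ) p.1 - fρ p.1) ^ 2 ∂ρ)
        + ∫ p, (2 * (((w : X → ℝ) p.1 - fρ p.1) * (fρ p.1 - p.2))
          + (fρ p.1 - p.2) ^ 2) ∂ρ := integral_add hdiff h23
    _ = (∫ p, ((w : X → ℝ) p.1 - fρ p.1) ^ 2 ∂ρ)
        + ((∫ p, 2 * (((w : X → ℝ) p.1 - fρ p.1) * (fρ p.1 - p.2)) ∂ρ)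
          + ∫ p, (fρ p.1 - p.2) ^ 2 ∂ρ) := by rw [integral_add h2int hIres]
    _ = ‖w - fρ‖ ^ 2 + ∫ p, ((fρ : X → ℝ) p.1 - p.2) ^ 2 ∂ρ := by
        rw [integral_const_mul, hcross0, hnorm]
        ring
end decomp


/-- Excess-risk characterization: with `ρ` a probability measure on `X × ℝ`
having finite second moment in `y`, `S : H → L²(X, ρ_X)` the (bounded)
inclusion of the hypothesis space, `f_ρ` the regression function
`f_ρ(x) = ∫ y dρ(y|x)`, and `P` the orthogonal projection onto the closure of
the range of `S`, for every `f̂ ∈ H`: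
`E(S f̂) - inf_{f ∈ H} E(S f) = ‖S f̂ - P f_ρ‖²`,
where `E(g) = ∫ (g(x) - y)² dρ(x, y)`. -/
theorem stmt19 {X : Type*} [MeasurableSpace X]
    {H : Type*} [NormedAddCommGroup H] [InnerProductSpace ℝ H]
    [CompleteSpace H] [TopologicalSpace.SeparableSpace H]
    (ρ : Measure (X × ℝ)) [IsProbabilityMeasure ρ]
    (hy2 : Integrable (fun p : X × ℝ => p.2 ^ 2) ρ)
    (S : H →L[ℝ] Lp ℝ 2 ρ.fst)
    (fρ : Lp ℝ 2 ρ.fst)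
    (hfρ : ∀ᵐ x ∂ρ.fst, fρ x = ∫ y, y ∂(ρ.condKernel x))
    (P : Lp ℝ 2 ρ.fst →L[ℝ] Lp ℝ 2 ρ.fst)
    (hPmem : ∀ g : Lp ℝ 2 ρ.fst,
      P g ∈ (LinearMap.range (S : H →ₗ[ℝ] Lp ℝ 2 ρ.fst)).topologicalClosure)
    (hPfix : ∀ g ∈ (LinearMap.range (S : H →ₗ[ℝ] Lp ℝ 2 ρ.fst)).topologicalClosure,
      P g = g)
    (hPorth : ∀ g : Lp ℝ 2 ρ.fst,
      ∀ h ∈ (LinearMap.range (S : H →ₗ[ℝ] Lp ℝ 2 ρ.fst)).topologicalClosure,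
        @inner ℝ _ _ (g - P g) h = 0)
    (fhat : H) :
    (∫ p, ((S fhat : Lp ℝ 2 ρ.fst) p.1 - p.2) ^ 2 ∂ρ) -
        (⨅ f : H, ∫ p, ((S f : Lp ℝ 2 ρ.fst) p.1 - p.2) ^ 2 ∂ρ) =
      ‖S fhat - P fρ‖ ^ 2 := by
  set M := (LinearMap.range (S : H →ₗ[ℝ] Lp ℝ 2 ρ.fst)).topologicalClosure with hM
  set C := ∫ p, ((fρ : X → ℝ) p.1 - p.2) ^ 2 ∂ρ with hC
  set D := ‖P fρ - fρ‖ ^ 2 + C with hD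
  -- decomposition for every f
  have hdec : ∀ f : H, (∫ p, ((S f : Lp ℝ 2 ρ.fst) p.1 - p.2) ^ 2 ∂ρ)
      = ‖S f - P fρ‖ ^ 2 + D := by
    intro f
    have h1 := aux_decomp ρ hy2 fρ hfρ (S f)
    have ha : S f - P fρ ∈ M := by
      refine Submodule.sub_mem _ ?_ (hPmem fρ)
      exact Submodule.le_topologicalClosure _ ⟨f, rfl⟩
    have hpyth : ‖S f - fρ‖ ^ 2 = ‖S f - P fρ‖ ^ 2 + ‖P fρ - fρ‖ ^ 2 := by
      have hsplit : S f - fρ = (S f - P fρ) + (P fρ - fρ) := by abel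
      have hinner : @inner ℝ _ _ (S f - P fρ) (P fρ - fρ) = 0 := by
        have h0 := hPorth fρ (S f - P fρ) ha
        have : (P fρ - fρ : Lp ℝ 2 ρ.fst) = -(fρ - P fρ) := by abel
        rw [this, inner_neg_right, real_inner_comm, h0, neg_zero]
      rw [hsplit, norm_add_sq_real, hinner]
      ring
    rw [h1, hpyth, hD]
    ring
  -- the infimum equals D
  have hbdd : BddBelow (Set.range fun f : H => ∫ p, ((S f : Lp ℝ 2 ρ.fst) p.1 - p.2) ^ 2 ∂ρ) := by
    refine ⟨D, ?_⟩
    rintro _ ⟨f, rfl⟩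
    dsimp only
    rw [hdec f]
    nlinarith [sq_nonneg ‖S f - P fρ‖]
  have hinf : (⨅ f : H, ∫ p, ((S f : Lp ℝ 2 ρ.fst) p.1 - p.2) ^ 2 ∂ρ) = D := by
    refine le_antisymm ?_ ?_
    · refine le_of_forall_pos_le_add fun ε hε => ?_
      have hPc : P fρ ∈ closure ((LinearMap.range (S : H →ₗ[ℝ] Lp ℝ 2 ρ.fst)) : Set _) := by
        rw [← Submodule.topologicalClosure_coe]
        exact hPmem fρ
      obtain ⟨b, hb, hdist⟩ := Metric.mem_closure_iff.mp hPc (Real.sqrt ε)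
        (Real.sqrt_pos.mpr hε)
      obtain ⟨f, rfl⟩ := hb
      refine ciInf_le_of_le hbdd f ?_
      rw [hdec f]
      have h1 : ‖S f - P fρ‖ < Real.sqrt ε := by
        rw [← dist_eq_norm, dist_comm]
        exact hdist
      have h2 : ‖S f - P fρ‖ ^ 2 < ε := by
        have := pow_lt_pow_left₀ h1 (norm_nonneg _) (n := 2) (by norm_num)
        rwa [Real.sq_sqrt hε.le] at this
      linarith
    · refine le_ciInf fun f => ?_
      rw [hdec f]
      nlinarith [sq_nonneg ‖S f - P fρ‖]
  rw [hdec fhat, hinf]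
  ring
end
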